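/- If a graphon (J,W) is pure and for some bigraph F = (U₁,U₂,E) we have t^b_ind(F,W) = 0, then for every point x₀ ∈ J, W(x₀,y) ∈ {0,1} for almost all y ∈ J. -/

import Mathlib

/-!
Purity makes the partially integrated density
`x ↦ ∫ ∏ᵢⱼ W(xᵢ,yⱼ)^[ij ∈ E] (1 - W(xᵢ,yⱼ))^[ij ∉ E] dy` Lipschitz for `r_W`, hence continuous.
It is nonnegative with zero integral against a measure of full support, so it vanishes at every
point, in particular at `x = (x₀,…,x₀)`. There the integrand factorises over the right vertices:
for some `j` the nonnegative function `z ↦ ∏ᵢ W(x₀,z)^[ij ∈ E] (1 - W(x₀,z))^[ij ∉ E]` has zero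
integral, so it vanishes almost everywhere, and each of its factors vanishes only where
`W(x₀,z) ∈ {0,1}`.
-/

open MeasureTheory

theorem Finset.norm_prod_sub_prod_le {ι R : Type*} [NormedCommRing R] [NormOneClass R]
    (s : Finset ι) {a b : ι → R} (ha : ∀ i ∈ s, ‖a i‖ ≤ 1) (hb : ∀ i ∈ s, ‖b i‖ ≤ 1) :
    ‖∏ i ∈ s, a i - ∏ i ∈ s, b i‖ ≤ ∑ i ∈ s, ‖a i - b i‖ := by
  classical
  induction s using Finset.induction_on with
  | empty => simp
  | insert i s hi ih =>
    simp only [Finset.mem_insert, forall_eq_or_imp] at ha hb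
    rw [Finset.prod_insert hi, Finset.prod_insert hi, Finset.sum_insert hi]
    have hbs : ‖∏ j ∈ s, b j‖ ≤ 1 :=
      (Finset.norm_prod_le _ _).trans (Finset.prod_le_one (fun _ _ => norm_nonneg _) hb.2)
    calc ‖a i * ∏ j ∈ s, a j - b i * ∏ j ∈ s, b j‖
        = ‖a i * (∏ j ∈ s, a j - ∏ j ∈ s, b j) + (a i - b i) * ∏ j ∈ s, b j‖ := by
          congr 1; ring
      _ ≤ ‖a i‖ * ‖∏ j ∈ s, a j - ∏ j ∈ s, b j‖ + ‖a i - b i‖ * ‖∏ j ∈ s, b j‖ :=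
        (norm_add_le _ _).trans (add_le_add (norm_mul_le _ _) (norm_mul_le _ _))
      _ ≤ 1 * ∑ j ∈ s, ‖a j - b j‖ + ‖a i - b i‖ * 1 := by
        gcongr
        exacts [ha.1, ih ha.2 hb.2]
      _ = ‖a i - b i‖ + ∑ j ∈ s, ‖a j - b j‖ := by ring

theorem Finset.prod_mem_Icc_zero_one {ι R : Type*} [CommMonoidWithZero R] [Preorder R]
    [ZeroLEOneClass R] [PosMulMono R] {f : ι → R} {s : Finset ι}
    (h : ∀ i ∈ s, f i ∈ Set.Icc 0 1) : ∏ i ∈ s, f i ∈ Set.Icc 0 1 :=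
  ⟨prod_nonneg fun i hi => (h i hi).1, prod_le_one (fun i hi => (h i hi).1) fun i hi => (h i hi).2⟩

theorem Continuous.eq_zero_of_integral_eq_zero_of_nonneg {X : Type*} [TopologicalSpace X]
    [MeasurableSpace X] {μ : Measure X} [μ.IsOpenPosMeasure] {f : X → ℝ} (hf : Continuous f)
    (hf_nonneg : 0 ≤ f) (hfi : Integrable f μ) (h : ∫ x, f x ∂μ = 0) : f = 0 :=
  (hf.ae_eq_iff_eq μ continuous_const).1 ((integral_eq_zero_iff_of_nonneg hf_nonneg hfi).1 h)

namespace Graphon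

variable {J ι κ : Type*} [DecidableEq ι] [DecidableEq κ] {W : J → J → ℝ} (E : Finset (ι × κ))

variable (W) in
def edgeWeight (p : ι × κ) (u v : J) : ℝ :=
  if p ∈ E then W u v else 1 - W u v

theorem edgeWeight_mem_Icc (hW : ∀ u v, W u v ∈ Set.Icc 0 1) (p : ι × κ) (u v : J) :
    edgeWeight W E p u v ∈ Set.Icc 0 1 := by
  have := hW u v
  unfold edgeWeight
  split_ifs
  · exact this
  · constructor <;> linarith [this.1, this.2]

theorem abs_edgeWeight_sub_edgeWeight (p : ι × κ) (u u' v : J) :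
    |edgeWeight W E p u v - edgeWeight W E p u' v| = |W u v - W u' v| := by
  unfold edgeWeight
  split_ifs
  · rfl
  · rw [sub_sub_sub_cancel_left, abs_sub_comm]

theorem eq_zero_or_eq_one_of_edgeWeight_eq_zero {p : ι × κ} {u v : J}
    (h : edgeWeight W E p u v = 0) : W u v = 0 ∨ W u v = 1 := by
  unfold edgeWeight at h
  split_ifs at h
  · exact .inl h
  · exact .inr (by linarith)

theorem measurable_edgeWeight [MeasurableSpace J] (hWm : Measurable (Function.uncurry W))
    (p : ι × κ) (u : J) : Measurable (edgeWeight W E p u) := by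
  have : Measurable (W u) := hWm.comp measurable_prodMk_left
  unfold edgeWeight
  split_ifs
  exacts [this, measurable_const.sub this]

variable [Fintype ι] [Fintype κ]

variable (W) in
def inducedDensity (x : ι → J) (y : κ → J) : ℝ :=
  ∏ i, ∏ j, edgeWeight W E (i, j) (x i) (y j)

theorem inducedDensity_mem_Icc (hW : ∀ u v, W u v ∈ Set.Icc 0 1) (x : ι → J) (y : κ → J) :
    inducedDensity W E x y ∈ Set.Icc 0 1 :=
  Finset.prod_mem_Icc_zero_one fun i _ => Finset.prod_mem_Icc_zero_one fun j _ =>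
    edgeWeight_mem_Icc E hW (i, j) (x i) (y j)

theorem abs_inducedDensity_sub_inducedDensity_le (hW : ∀ u v, W u v ∈ Set.Icc 0 1)
    (x x' : ι → J) (y : κ → J) :
    |inducedDensity W E x y - inducedDensity W E x' y|
      ≤ ∑ i, ∑ j, |W (x i) (y j) - W (x' i) (y j)| := by
  have hnorm : ∀ x : ι → J, ∀ p ∈ Finset.univ, ‖edgeWeight W E p (x p.1) (y p.2)‖ ≤ 1 := by
    intro x p _
    have := edgeWeight_mem_Icc E hW p (x p.1) (y p.2)
    exact abs_le.2 ⟨by linarith [this.1], this.2⟩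
  have := Finset.norm_prod_sub_prod_le Finset.univ (hnorm x) (hnorm x')
  simp only [Real.norm_eq_abs, abs_edgeWeight_sub_edgeWeight] at this
  simpa only [inducedDensity, Fintype.prod_prod_type, Fintype.sum_prod_type] using this

theorem measurable_inducedDensity [MeasurableSpace J] (hWm : Measurable (Function.uncurry W))
    (x : ι → J) : Measurable (inducedDensity W E x) :=
  Finset.measurable_prod _ fun i _ => Finset.measurable_prod _ fun j _ =>
    (measurable_edgeWeight E hWm (i, j) (x i)).comp (measurable_pi_apply j)

section Measure

variable [MeasurableSpace J] (μ : Measure J)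

variable (W) in
/-- `t^b_{U₁,ind}(F,W;x)`. -/
noncomputable def partialInducedDensity (x : ι → J) : ℝ :=
  ∫ y, inducedDensity W E x y ∂Measure.pi fun _ => μ

variable [IsProbabilityMeasure μ]

theorem integrable_inducedDensity (hW : ∀ u v, W u v ∈ Set.Icc 0 1)
    (hWm : Measurable (Function.uncurry W)) (x : ι → J) :
    Integrable (inducedDensity W E x) (Measure.pi fun _ => μ) :=
  .of_mem_Icc 0 1 (measurable_inducedDensity E hWm x).aemeasurable
    (ae_of_all _ (inducedDensity_mem_Icc E hW x))

theorem partialInducedDensity_mem_Icc (hW : ∀ u v, W u v ∈ Set.Icc 0 1) (x : ι → J) :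
    partialInducedDensity W E μ x ∈ Set.Icc 0 1 := by
  refine ⟨integral_nonneg fun y => (inducedDensity_mem_Icc E hW x y).1, ?_⟩
  calc partialInducedDensity W E μ x ≤ ∫ _, (1 : ℝ) ∂Measure.pi fun _ => μ :=
        integral_mono_of_nonneg (ae_of_all _ fun y => (inducedDensity_mem_Icc E hW x y).1)
          (integrable_const 1) (ae_of_all _ fun y => (inducedDensity_mem_Icc E hW x y).2)
    _ = 1 := by simp

theorem partialInducedDensity_const (x₀ : J) :
    partialInducedDensity W E μ (fun _ => x₀)
      = ∏ j, ∫ z, ∏ i, edgeWeight W E (i, j) x₀ z ∂μ := by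
  rw [partialInducedDensity, ← integral_fintype_prod_eq_prod]
  exact integral_congr_ae (ae_of_all _ fun y => Finset.prod_comm)

theorem ae_eq_zero_or_eq_one_of_partialInducedDensity_const_eq_zero
    (hW : ∀ u v, W u v ∈ Set.Icc 0 1) (hWm : Measurable (Function.uncurry W)) {x₀ : J}
    (h : partialInducedDensity W E μ (fun _ => x₀) = 0) :
    ∀ᵐ z ∂μ, W x₀ z = 0 ∨ W x₀ z = 1 := by
  rw [partialInducedDensity_const] at h
  obtain ⟨j, -, hj⟩ := Finset.prod_eq_zero_iff.1 h
  have hmem : ∀ z, ∏ i, edgeWeight W E (i, j) x₀ z ∈ Set.Icc 0 1 := fun z =>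
    Finset.prod_mem_Icc_zero_one fun i _ => edgeWeight_mem_Icc E hW (i, j) x₀ z
  have hint : Integrable (fun z => ∏ i, edgeWeight W E (i, j) x₀ z) μ :=
    .of_mem_Icc 0 1 (Finset.measurable_prod _ fun i _ => measurable_edgeWeight E hWm (i, j) x₀
      ).aemeasurable (ae_of_all _ hmem)
  filter_upwards [(integral_eq_zero_iff_of_nonneg (fun z => (hmem z).1) hint).1 hj] with z hz
  obtain ⟨i, -, hi⟩ := Finset.prod_eq_zero_iff.1 hz
  exact eq_zero_or_eq_one_of_edgeWeight_eq_zero E hi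

end Measure

section Pure

variable [PseudoMetricSpace J] [MeasurableSpace J] (μ : Measure J) [IsProbabilityMeasure μ]

theorem lipschitzWith_partialInducedDensity (hW : ∀ u v, W u v ∈ Set.Icc 0 1)
    (hWm : Measurable (Function.uncurry W))
    (hdist : ∀ u u', ∫ z, |W u z - W u' z| ∂μ ≤ dist u u') :
    LipschitzWith (Fintype.card ι * Fintype.card κ) (partialInducedDensity W E μ) := by
  refine LipschitzWith.of_dist_le_mul fun x x' => ?_
  have hrow : ∀ u, Integrable (W u) μ := fun u =>
    .of_mem_Icc 0 1 (hWm.comp measurable_prodMk_left).aemeasurable (ae_of_all _ (hW u))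
  have hdiff : ∀ i j, Integrable (fun y : κ → J => |W (x i) (y j) - W (x' i) (y j)|)
      (Measure.pi fun _ => μ) := fun i j =>
      integrable_comp_eval (μ := fun _ : κ => μ) (f := fun z => |W (x i) z - W (x' i) z|)
        ((hrow (x i)).sub (hrow (x' i))).abs
  calc dist (partialInducedDensity W E μ x) (partialInducedDensity W E μ x')
      = |∫ y, (inducedDensity W E x y - inducedDensity W E x' y) ∂Measure.pi fun _ => μ| := by
        rw [Real.dist_eq, partialInducedDensity, partialInducedDensity,
          integral_sub (integrable_inducedDensity E μ hW hWm x)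
            (integrable_inducedDensity E μ hW hWm x')]
    _ ≤ ∫ y, |inducedDensity W E x y - inducedDensity W E x' y| ∂Measure.pi fun _ => μ :=
        abs_integral_le_integral_abs
    _ ≤ ∫ y, ∑ i, ∑ j, |W (x i) (y j) - W (x' i) (y j)| ∂Measure.pi fun _ => μ :=
        integral_mono (((integrable_inducedDensity E μ hW hWm x).sub
            (integrable_inducedDensity E μ hW hWm x')).abs)
          (integrable_finsetSum _ fun i _ => integrable_finsetSum _ fun j _ => hdiff i j)
          (abs_inducedDensity_sub_inducedDensity_le E hW x x')
    _ = ∑ i, ∑ _j : κ, ∫ z, |W (x i) z - W (x' i) z| ∂μ := by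
        rw [integral_finsetSum _ fun i _ => integrable_finsetSum _ fun j _ => hdiff i j]
        refine Finset.sum_congr rfl fun i _ => ?_
        rw [integral_finsetSum _ fun j _ => hdiff i j]
        exact Finset.sum_congr rfl fun j _ =>
          integral_comp_eval (μ := fun _ : κ => μ) (f := fun z => |W (x i) z - W (x' i) z|)
            ((hrow (x i)).sub (hrow (x' i))).abs.aestronglyMeasurable
    _ ≤ ∑ _i : ι, ∑ _j : κ, dist x x' := by
        gcongr with i
        exact (hdist _ _).trans (dist_le_pi_dist x x' i)
    _ = ((Fintype.card ι * Fintype.card κ : NNReal) : ℝ) * dist x x' := by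
        simp only [Finset.sum_const, Finset.card_univ, nsmul_eq_mul]
        push_cast
        ring

end Pure

end Graphon

theorem pure_thin_graphon_rows_zero_one_general
    {J : Type*} [MetricSpace J] [TopologicalSpace.SeparableSpace J]
    [MeasurableSpace J] [BorelSpace J]
    (μ : Measure J) [IsProbabilityMeasure μ] [μ.IsOpenPosMeasure]
    (W : J → J → ℝ)
    (hWmeas : Measurable (fun p : J × J => W p.1 p.2))
    (hW0 : ∀ x y, 0 ≤ W x y) (hW1 : ∀ x y, W x y ≤ 1)
    (hdist : ∀ x y : J, dist x y = ∫ z, |W x z - W y z| ∂μ)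
    (k₁ k₂ : ℕ) (E : Finset (Fin k₁ × Fin k₂))
    (hthin : (∫ x : Fin k₁ → J, ∫ y : Fin k₂ → J,
      (∏ i, ∏ j, if (i, j) ∈ E then W (x i) (y j) else 1 - W (x i) (y j))
        ∂(Measure.pi fun _ => μ) ∂(Measure.pi fun _ => μ)) = 0) :
    ∀ x₀ : J, ∀ᵐ y ∂μ, W x₀ y = 0 ∨ W x₀ y = 1 := by
  have hW : ∀ u v, W u v ∈ Set.Icc 0 1 := fun u v => ⟨hW0 u v, hW1 u v⟩
  have hbound := Graphon.partialInducedDensity_mem_Icc E μ hW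
  have hcont : Continuous (Graphon.partialInducedDensity W E μ) :=
    (Graphon.lipschitzWith_partialInducedDensity E μ hW hWmeas
      fun u u' => (hdist u u').ge).continuous
  have hzero : Graphon.partialInducedDensity W E μ = 0 :=
    hcont.eq_zero_of_integral_eq_zero_of_nonneg (fun x => (hbound x).1)
      (.of_mem_Icc 0 1 hcont.aemeasurable (ae_of_all _ hbound)) hthin
  exact fun x₀ => Graphon.ae_eq_zero_or_eq_one_of_partialInducedDensity_const_eq_zero E μ hW
    hWmeas (congrFun hzero fun _ => x₀)

/-- If a pure graphon `(J,W)` satisfies `t^b_ind(F,W) = 0` for some bigraph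
`F = (U₁,U₂,E)` (viewing `W` as a bigraphon with `J₁ = J₂ = J`), then for
every point `x₀ ∈ J`, `W(x₀,y) ∈ {0,1}` for almost all `y`. -/
theorem pure_thin_graphon_rows_zero_one
    {J : Type*} [MetricSpace J] [CompleteSpace J] [TopologicalSpace.SeparableSpace J]
    [MeasurableSpace J] [BorelSpace J]
    (μ : Measure J) [IsProbabilityMeasure μ] [μ.IsOpenPosMeasure]
    (W : J → J → ℝ)
    (hWmeas : Measurable (fun p : J × J => W p.1 p.2))
    (hWsymm : ∀ x y, W x y = W y x)
    (hW0 : ∀ x y, 0 ≤ W x y) (hW1 : ∀ x y, W x y ≤ 1)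
    (hdist : ∀ x y : J, dist x y = ∫ z, |W x z - W y z| ∂μ)
    (k₁ k₂ : ℕ) (E : Finset (Fin k₁ × Fin k₂))
    (hthin : (∫ x : Fin k₁ → J, ∫ y : Fin k₂ → J,
      (∏ i, ∏ j, if (i, j) ∈ E then W (x i) (y j) else 1 - W (x i) (y j))
        ∂(Measure.pi fun _ => μ) ∂(Measure.pi fun _ => μ)) = 0) :
    ∀ x₀ : J, ∀ᵐ y ∂μ, W x₀ y = 0 ∨ W x₀ y = 1 :=
  pure_thin_graphon_rows_zero_one_general μ W hWmeas hW0 hW1 hdist k₁ k₂ E hthin
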